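/- (Gerl-type inequality) For a reversible stochastic kernel p with weight σ, every r ≥ 2, and every finitely supported nonnegative function f : I → ℝ, one has ‖f^r‖_{D(1)} ≤ 2r·‖f‖_{r,σ}^{r−1}·‖f‖_{D(r)}, where ‖g‖_{D(s)} = ((1/2)·Σ_{ξ,η} σ(ξ)·p(ξ,η)·|g(ξ)−g(η)|^s)^{1/s} and ‖f‖_{r,σ} = (Σ_ξ σ(ξ)·f(ξ)^r)^{1/r}. -/

import Mathlib

open Real Finset

/-!
For `a, b ≥ 0`, convexity of `t ↦ t ^ r` gives `|a ^ r - b ^ r| ≤ r * max a b ^ (r - 1) * |a - b|`.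
Weighting the pair `(ξ, η)` by `σ ξ * p ξ η / 2`, Hölder's inequality with exponents `r / (r - 1)`
and `r` bounds the left-hand side by `r * (Σ (σ p / 2) * max (f ξ) (f η) ^ r) ^ ((r - 1) / r)`
times `‖f‖_{D(r)}`. Since `max (f ξ) (f η) ^ r ≤ f ξ ^ r + f η ^ r`, row sums of `p` at most `1`
and reversibility (which turns column sums into row sums) bound the base of the first factor by
`Σ σ f ^ r`, so the inequality holds even with the constant `r` in place of `2 r`. Only sites
within one step of the support of `f` contribute, so all sums are finite.
-/

theorem rpow_sub_rpow_le_mul_rpow_sub_one_mul {a b r : ℝ} (hb : 0 ≤ b) (hba : b ≤ a)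
    (hr : 1 ≤ r) : a ^ r - b ^ r ≤ r * a ^ (r - 1) * (a - b) := by
  rcases (hb.trans hba).eq_or_lt with rfl | ha
  · simp [le_antisymm hba hb]
  have bernoulli := one_add_mul_self_le_rpow_one_add
    (by linarith [div_nonneg hb ha.le] : -1 ≤ b / a - 1) hr
  rw [add_sub_cancel, div_rpow hb ha.le] at bernoulli
  have har : 0 < a ^ r := rpow_pos_of_pos ha r
  have hsplit : a ^ r = a ^ (r - 1) * a := by rw [← rpow_add_one ha.ne', sub_add_cancel]
  have := mul_le_mul_of_nonneg_right bernoulli har.le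
  rw [div_mul_cancel₀ _ har.ne'] at this
  have h : (1 + r * (b / a - 1)) * a ^ r = a ^ r - r * a ^ (r - 1) * (a - b) := by
    rw [hsplit]; field_simp; ring
  linarith

theorem abs_rpow_sub_rpow_le {a b r : ℝ} (ha : 0 ≤ a) (hb : 0 ≤ b) (hr : 1 ≤ r) :
    |a ^ r - b ^ r| ≤ r * max a b ^ (r - 1) * |a - b| := by
  wlog hba : b ≤ a generalizing a b
  · rw [abs_sub_comm, abs_sub_comm a, max_comm]
    exact this hb ha (le_of_not_ge hba)
  rw [max_eq_left hba, abs_of_nonneg (sub_nonneg.2 (rpow_le_rpow hb hba (by linarith))),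
    abs_of_nonneg (sub_nonneg.2 hba)]
  exact rpow_sub_rpow_le_mul_rpow_sub_one_mul hb hba hr

theorem inner_le_weighted_Lp_mul_Lq_of_nonneg {ι : Type*} (s : Finset ι) {p q : ℝ}
    (hpq : p.HolderConjugate q) {w f g : ι → ℝ} (hw : ∀ i ∈ s, 0 ≤ w i)
    (hf : ∀ i ∈ s, 0 ≤ f i) (hg : ∀ i ∈ s, 0 ≤ g i) :
    ∑ i ∈ s, w i * f i * g i
      ≤ (∑ i ∈ s, w i * f i ^ p) ^ (1 / p) * (∑ i ∈ s, w i * g i ^ q) ^ (1 / q) := by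
  have key := inner_le_Lp_mul_Lq_of_nonneg s hpq
    (f := fun i => w i ^ (1 / p) * f i) (g := fun i => w i ^ (1 / q) * g i)
    (fun i hi => mul_nonneg (rpow_nonneg (hw i hi) _) (hf i hi))
    (fun i hi => mul_nonneg (rpow_nonneg (hw i hi) _) (hg i hi))
  have hprod : ∀ i ∈ s, w i ^ (1 / p) * f i * (w i ^ (1 / q) * g i) = w i * f i * g i := by
    intro i hi
    rw [mul_mul_mul_comm, ← rpow_add' (hw i hi) (by simp [hpq.inv_add_inv_eq_one]),
      one_div, one_div, hpq.inv_add_inv_eq_one, rpow_one, mul_assoc]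
  have hpow : ∀ {t : ℝ}, 0 < t → ∀ {h : ι → ℝ}, (∀ i ∈ s, 0 ≤ h i) →
      ∀ i ∈ s, (w i ^ (1 / t) * h i) ^ t = w i * h i ^ t := by
    intro t ht h hh i hi
    rw [mul_rpow (rpow_nonneg (hw i hi) _) (hh i hi), ← rpow_mul (hw i hi),
      one_div_mul_cancel ht.ne', rpow_one]
  rwa [sum_congr rfl hprod, sum_congr rfl (hpow hpq.pos hf),
    sum_congr rfl (hpow hpq.symm.pos hg)] at key

theorem tsum_tsum_eq_sum_sum {ι α : Type*} [AddCommMonoid α] [TopologicalSpace α]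
    {g : ι → ι → α} (E : Finset ι) (h : ∀ ξ η, g ξ η ≠ 0 → ξ ∈ E ∧ η ∈ E) :
    ∑' ξ, ∑' η, g ξ η = ∑ ξ ∈ E, ∑ η ∈ E, g ξ η := by
  rw [tsum_congr fun ξ => tsum_eq_sum fun η hη => by_contra fun hg => hη (h ξ η hg).2]
  exact tsum_eq_sum fun ξ hξ => sum_eq_zero fun η _ => by_contra fun hg => hξ (h ξ η hg).1

section
variable {I : Type*} {E : Finset I} {W : I → I → ℝ} {σ f : I → ℝ}

theorem sum_sum_mul_max_rpow_le (hW : ∀ ξ η, 0 ≤ W ξ η) (hf : ∀ ξ, 0 ≤ f ξ)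
    (hrow : ∀ ξ, ∑ η ∈ E, W ξ η ≤ σ ξ) (hcol : ∀ η, ∑ ξ ∈ E, W ξ η ≤ σ η) {r : ℝ} :
    ∑ ξ ∈ E, ∑ η ∈ E, W ξ η * max (f ξ) (f η) ^ r ≤ 2 * ∑ ξ ∈ E, σ ξ * f ξ ^ r := by
  have hmax : ∀ ξ η, max (f ξ) (f η) ^ r ≤ f ξ ^ r + f η ^ r := fun ξ η => by
    rcases max_choice (f ξ) (f η) with h | h <;> rw [h]
    · linarith [rpow_nonneg (hf η) r]
    · linarith [rpow_nonneg (hf ξ) r]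
  have hleft : ∑ ξ ∈ E, ∑ η ∈ E, W ξ η * f ξ ^ r ≤ ∑ ξ ∈ E, σ ξ * f ξ ^ r :=
    sum_le_sum fun ξ _ => by
      rw [← sum_mul]; exact mul_le_mul_of_nonneg_right (hrow ξ) (rpow_nonneg (hf ξ) r)
  have hright : ∑ ξ ∈ E, ∑ η ∈ E, W ξ η * f η ^ r ≤ ∑ η ∈ E, σ η * f η ^ r := by
    rw [sum_comm]
    exact sum_le_sum fun η _ => by
      rw [← sum_mul]; exact mul_le_mul_of_nonneg_right (hcol η) (rpow_nonneg (hf η) r)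
  calc ∑ ξ ∈ E, ∑ η ∈ E, W ξ η * max (f ξ) (f η) ^ r
      ≤ ∑ ξ ∈ E, ∑ η ∈ E, (W ξ η * f ξ ^ r + W ξ η * f η ^ r) :=
        sum_le_sum fun ξ _ => sum_le_sum fun η _ => by
          rw [← mul_add]; exact mul_le_mul_of_nonneg_left (hmax ξ η) (hW ξ η)
    _ ≤ 2 * ∑ ξ ∈ E, σ ξ * f ξ ^ r := by
        simp only [sum_add_distrib]; linarith

theorem half_sum_sum_mul_abs_rpow_sub_rpow_le (hW : ∀ ξ η, 0 ≤ W ξ η) (hf : ∀ ξ, 0 ≤ f ξ)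
    (hrow : ∀ ξ, ∑ η ∈ E, W ξ η ≤ σ ξ) (hcol : ∀ η, ∑ ξ ∈ E, W ξ η ≤ σ η) {r : ℝ} (hr : 1 < r) :
    (1 / 2) * ∑ ξ ∈ E, ∑ η ∈ E, W ξ η * |f ξ ^ r - f η ^ r|
      ≤ r * (∑ ξ ∈ E, σ ξ * f ξ ^ r) ^ ((r - 1) / r)
          * ((1 / 2) * ∑ ξ ∈ E, ∑ η ∈ E, W ξ η * |f ξ - f η| ^ r) ^ (1 / r) := by
  set q := r.conjExponent
  have hq : q.HolderConjugate r := (HolderConjugate.conjExponent hr).symm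
  have h1q : 1 / q = (r - 1) / r := one_div_div _ _
  set w : I × I → ℝ := fun z => 1 / 2 * W z.1 z.2
  set M : I × I → ℝ := fun z => max (f z.1) (f z.2)
  have hw : ∀ z ∈ E ×ˢ E, 0 ≤ w z := fun z _ => by positivity [hW z.1 z.2]
  have hM : ∀ z, 0 ≤ M z := fun z => le_max_of_le_left (hf _)
  have hpairs : ∀ g : I → I → ℝ,
      (1 / 2) * ∑ ξ ∈ E, ∑ η ∈ E, W ξ η * g ξ η = ∑ z ∈ E ×ˢ E, w z * g z.1 z.2 := fun g => by
    simp only [w, sum_product, mul_sum, mul_assoc]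
  have henergy : ∑ z ∈ E ×ˢ E, w z * (M z ^ (r - 1)) ^ q ≤ ∑ ξ ∈ E, σ ξ * f ξ ^ r := by
    have hexp : (r - 1) * q = r := by simp only [q, conjExponent]; field_simp [(sub_pos.2 hr).ne']
    simp only [← rpow_mul (hM _), hexp, M]
    rw [← hpairs fun ξ η => max (f ξ) (f η) ^ r]
    linarith [sum_sum_mul_max_rpow_le (r := r) hW hf hrow hcol]
  calc (1 / 2) * ∑ ξ ∈ E, ∑ η ∈ E, W ξ η * |f ξ ^ r - f η ^ r|
      = ∑ z ∈ E ×ˢ E, w z * |f z.1 ^ r - f z.2 ^ r| := hpairs _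
    _ ≤ ∑ z ∈ E ×ˢ E, w z * (r * M z ^ (r - 1) * |f z.1 - f z.2|) :=
        sum_le_sum fun z hz => mul_le_mul_of_nonneg_left
          (abs_rpow_sub_rpow_le (hf _) (hf _) hr.le) (hw z hz)
    _ = r * ∑ z ∈ E ×ˢ E, w z * M z ^ (r - 1) * |f z.1 - f z.2| := by
        rw [mul_sum]; exact sum_congr rfl fun _ _ => by ring
    _ ≤ r * ((∑ z ∈ E ×ˢ E, w z * (M z ^ (r - 1)) ^ q) ^ (1 / q)
          * (∑ z ∈ E ×ˢ E, w z * |f z.1 - f z.2| ^ r) ^ (1 / r)) := by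
        gcongr
        exact inner_le_weighted_Lp_mul_Lq_of_nonneg _ hq hw (fun z _ => rpow_nonneg (hM z) _)
          (fun z _ => abs_nonneg _)
    _ ≤ r * ((∑ ξ ∈ E, σ ξ * f ξ ^ r) ^ (1 / q)
          * (∑ z ∈ E ×ˢ E, w z * |f z.1 - f z.2| ^ r) ^ (1 / r)) := by
        gcongr
        · exact rpow_nonneg (sum_nonneg fun z hz => mul_nonneg (hw z hz) (by positivity)) _
        · exact sum_nonneg fun z hz => mul_nonneg (hw z hz) (by positivity [hM z])
        · exact one_div_nonneg.2 hq.nonneg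
    _ = _ := by rw [hpairs fun ξ η => |f ξ - f η| ^ r, h1q, mul_assoc]

end

section kernel
variable {I : Type*} {σ : I → ℝ} {p : I → I → ℝ}

def stepClosure (p : I → I → ℝ) (s : Set I) : Set I :=
  s ∪ ⋃ ζ ∈ s, Function.support (p ζ)

theorem Set.Finite.stepClosure {s : Set I} (hs : s.Finite)
    (hrow : ∀ ξ, (Function.support (p ξ)).Finite) : (stepClosure p s).Finite :=
  hs.union (hs.biUnion fun ζ _ => hrow ζ)

theorem subset_stepClosure (s : Set I) : s ⊆ stepClosure p s := Set.subset_union_left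

theorem mem_stepClosure_of_ne (hσ : ∀ ξ, 0 < σ ξ) (hrev : ∀ ξ η, σ ξ * p ξ η = σ η * p η ξ)
    {f : I → ℝ} {ξ η : I} (hp : p ξ η ≠ 0) (hf : f ξ ≠ f η) :
    ξ ∈ stepClosure p (Function.support f) ∧ η ∈ stepClosure p (Function.support f) := by
  simp only [stepClosure, Set.mem_union, Set.mem_iUnion₂, Function.mem_support]
  by_cases hfξ : f ξ = 0
  · have hfη : f η ≠ 0 := fun h => hf (hfξ.trans h.symm)
    have hpηξ : p η ξ ≠ 0 := by
      have := hrev ξ η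
      intro h; rw [h, mul_zero] at this
      exact hp ((mul_eq_zero.1 this).resolve_left (hσ ξ).ne')
    exact ⟨Or.inr ⟨η, hfη, hpηξ⟩, Or.inl hfη⟩
  · exact ⟨Or.inl hfξ, Or.inr ⟨ξ, hfξ, hp⟩⟩

theorem sum_le_one_of_tsum_eq_one {g : I → ℝ} (hg : ∀ η, 0 ≤ g η)
    (hfin : (Function.support g).Finite) (hsum : ∑' η, g η = 1) (E : Finset I) :
    ∑ η ∈ E, g η ≤ 1 :=
  hsum ▸ (summable_of_hasFiniteSupport hfin).sum_le_tsum E fun η _ => hg η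

end kernel

theorem gerl_inequality_general {I : Type*} (σ : I → ℝ) (p : I → I → ℝ)
    (hσ : ∀ ξ, 0 < σ ξ) (hp : ∀ ξ η, 0 ≤ p ξ η)
    (hrow : ∀ ξ, (Function.support (p ξ)).Finite)
    (hstoch : ∀ ξ, ∑' η, p ξ η = 1)
    (hrev : ∀ ξ η, σ ξ * p ξ η = σ η * p η ξ)
    (f : I → ℝ) (hf0 : ∀ ξ, 0 ≤ f ξ) (hf : (Function.support f).Finite)
    (r : ℝ) (hr : 2 ≤ r) :
    ((1 : ℝ) / 2) * ∑' ξ, ∑' η, σ ξ * p ξ η * |f ξ ^ r - f η ^ r|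
      ≤ 2 * r * (∑' ξ, σ ξ * f ξ ^ r) ^ ((r - 1) / r)
          * (((1 : ℝ) / 2) * ∑' ξ, ∑' η, σ ξ * p ξ η * |f ξ - f η| ^ r) ^ (1 / r) := by
  classical
  have hW : ∀ ξ η, 0 ≤ σ ξ * p ξ η := fun ξ η => mul_nonneg (hσ ξ).le (hp ξ η)
  set E := (hf.stepClosure hrow).toFinset
  have hE : ∀ ξ η, p ξ η ≠ 0 → f ξ ≠ f η → ξ ∈ E ∧ η ∈ E := fun ξ η hpξη hne => by
    simpa [E] using mem_stepClosure_of_ne hσ hrev hpξη hne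
  have hsupp : ∀ ξ ∉ E, f ξ = 0 := fun ξ hξ => by
    by_contra h; exact hξ ((Set.Finite.mem_toFinset _).2 (subset_stepClosure _ h))
  have hrowE : ∀ ξ, ∑ η ∈ E, σ ξ * p ξ η ≤ σ ξ := fun ξ => by
    rw [← mul_sum]
    exact mul_le_of_le_one_right (hσ ξ).le (sum_le_one_of_tsum_eq_one (hp ξ) (hrow ξ) (hstoch ξ) E)
  have hcolE : ∀ η, ∑ ξ ∈ E, σ ξ * p ξ η ≤ σ η := fun η => by
    simpa only [hrev _ η] using hrowE η
  rw [tsum_tsum_eq_sum_sum E fun ξ η h => hE ξ η (by rintro h0; simp [h0] at h)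
      (by rintro h0; simp [h0] at h),
    tsum_tsum_eq_sum_sum E fun ξ η h => hE ξ η (by rintro h0; simp [h0] at h)
      (by rintro h0; simp [h0, zero_rpow (by linarith : r ≠ 0)] at h),
    tsum_eq_sum fun ξ hξ => by simp [hsupp ξ hξ, zero_rpow (by linarith : r ≠ 0)]]
  refine (half_sum_sum_mul_abs_rpow_sub_rpow_le hW hf0 hrowE hcolE (by linarith)).trans ?_
  gcongr ?_ * _ * _
  · exact rpow_nonneg (mul_nonneg one_half_pos.le (sum_nonneg fun ξ _ => sum_nonneg fun η _ =>
      mul_nonneg (hW ξ η) (by positivity))) _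
  · exact rpow_nonneg (sum_nonneg fun ξ _ => mul_nonneg (hσ ξ).le (rpow_nonneg (hf0 ξ) r)) _
  · linarith

/-- Gerl-type inequality: `‖f^r‖_{D(1)} ≤ 2r·‖f‖_{r,σ}^{r−1}·‖f‖_{D(r)}` for a reversible
stochastic kernel, `r ≥ 2`, and finitely supported nonnegative `f`. -/
theorem gerl_inequality {I : Type*} [Countable I] (σ : I → ℝ) (p : I → I → ℝ)
    (hσ : ∀ ξ, 0 < σ ξ) (hp : ∀ ξ η, 0 ≤ p ξ η)
    (hrow : ∀ ξ, (Function.support (p ξ)).Finite)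
    (hstoch : ∀ ξ, ∑' η, p ξ η = 1)
    (hrev : ∀ ξ η, σ ξ * p ξ η = σ η * p η ξ)
    (f : I → ℝ) (hf0 : ∀ ξ, 0 ≤ f ξ) (hf : (Function.support f).Finite)
    (r : ℝ) (hr : 2 ≤ r) :
    ((1 : ℝ) / 2) * ∑' ξ, ∑' η, σ ξ * p ξ η * |f ξ ^ r - f η ^ r|
      ≤ 2 * r * (∑' ξ, σ ξ * f ξ ^ r) ^ ((r - 1) / r)
          * (((1 : ℝ) / 2) * ∑' ξ, ∑' η, σ ξ * p ξ η * |f ξ - f η| ^ r) ^ (1 / r) :=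
  gerl_inequality_general σ p hσ hp hrow hstoch hrev f hf0 hf r hr
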